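/- Let H ∈ (0,1), r ≥ 1 an integer with H = 1 - 1/(2r), and let ρ(k) = (|k+1|^{2H} + |k-1|^{2H} - 2|k|^{2H})/2. Then there is a constant C = C(H,r) such that for all integers n ≥ 1 and reals t ≥ 0, 2^{-nrH} ∑_{k,l=0}^{⌊2^{n/2}t⌋-1} |ρ(k-l)|^r ≤ C 2^{n(1/2 - rH)} (t(1+n) + t²). -/

import Mathlib

open Real Finset

/-- The correlation function of fractional Brownian increments. -/
noncomputable def rho (H : ℝ) (k : ℤ) : ℝ :=
  (|(k : ℝ) + 1| ^ (2*H) + |(k : ℝ) - 1| ^ (2*H) - 2 * |(k : ℝ)| ^ (2*H)) / 2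

/-- Convexity tangent line inequality for rpow, `p ≥ 1`. -/
lemma tangent_lower {p x y : ℝ} (hp : 1 ≤ p) (hx : 0 < x) (hy : 0 ≤ y) :
    x ^ p + p * x ^ (p - 1) * (y - x) ≤ y ^ p := by
  have hs : -1 ≤ y / x - 1 := by
    have : 0 ≤ y / x := div_nonneg hy hx.le
    linarith
  have hB := one_add_mul_self_le_rpow_one_add hs hp
  rw [show 1 + (y / x - 1) = y / x by ring, Real.div_rpow hy hx.le] at hB
  have hxp : (0:ℝ) < x ^ p := rpow_pos_of_pos hx p
  have hB2 := mul_le_mul_of_nonneg_right hB hxp.le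
  rw [div_mul_cancel₀ _ hxp.ne'] at hB2
  have hxx : x ^ (p - 1) * x = x ^ p := by
    rw [← Real.rpow_add_one hx.ne' (p - 1)]; ring_nf
  have key : (1 + p * (y / x - 1)) * x ^ p = x ^ p + p * x ^ (p - 1) * (y - x) := by
    rw [← hxx]; field_simp
  linarith [key ▸ hB2]

/-- Concavity tangent line inequality for rpow, `0 ≤ q ≤ 1`. -/
lemma tangent_upper {q x y : ℝ} (hq0 : 0 ≤ q) (hq1 : q ≤ 1) (hx : 0 < x) (hy : 0 ≤ y) :
    y ^ q ≤ x ^ q + q * x ^ (q - 1) * (y - x) := by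
  have hs : -1 ≤ y / x - 1 := by
    have : 0 ≤ y / x := div_nonneg hy hx.le
    linarith
  have hB := rpow_one_add_le_one_add_mul_self hs hq0 hq1
  rw [show 1 + (y / x - 1) = y / x by ring, Real.div_rpow hy hx.le] at hB
  have hxp : (0:ℝ) < x ^ q := rpow_pos_of_pos hx q
  have hB2 := mul_le_mul_of_nonneg_right hB hxp.le
  rw [div_mul_cancel₀ _ hxp.ne'] at hB2
  have hxx : x ^ (q - 1) * x = x ^ q := by
    rw [← Real.rpow_add_one hx.ne' (q - 1)]; ring_nf
  have key : (1 + q * (y / x - 1)) * x ^ q = x ^ q + q * x ^ (q - 1) * (y - x) := by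
    rw [← hxx]; field_simp
  linarith [key ▸ hB2]

lemma rho_zero (H : ℝ) (hH : 0 < H) : rho H 0 = 1 := by
  simp only [rho, Int.cast_zero, zero_add, zero_sub, abs_zero, abs_one, abs_neg,
    Real.one_rpow, Real.zero_rpow (by positivity : 2*H ≠ 0)]
  norm_num

lemma rho_neg (H : ℝ) (k : ℤ) : rho H (-k) = rho H k := by
  unfold rho
  push_cast
  rw [show (-(k:ℝ)) + 1 = -((k:ℝ) - 1) by ring, show (-(k:ℝ)) - 1 = -((k:ℝ) + 1) by ring,
    abs_neg, abs_neg, abs_neg]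
  ring

set_option maxHeartbeats 1000000 in
lemma rho_nat_bound (H : ℝ) (hH1 : H < 1) (r : ℕ) (hr : 1 ≤ r) (hHr : H = 1 - 1/(2*r))
    (m : ℕ) (hm : 1 ≤ m) :
    |rho H m| ≤ 4 * (m : ℝ) ^ (-(1 / (r:ℝ))) := by
  have hrR : (1:ℝ) ≤ (r:ℝ) := by exact_mod_cast hr
  have hrpos : (0:ℝ) < r := by linarith
  have hrinv : 0 < 1 / (r:ℝ) := by positivity
  have hrinv1 : 1 / (r:ℝ) ≤ 1 := by
    rw [div_le_one hrpos]; exact hrR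
  set p : ℝ := 2 * H with hp
  have hpval : p = 2 - 1 / (r:ℝ) := by
    rw [hp, hHr]; field_simp
  have hp1 : 1 ≤ p := by rw [hpval]; linarith
  have hp2 : p ≤ 2 := by rw [hpval]; linarith
  rcases eq_or_lt_of_le hm with h1 | h2
  · -- m = 1
    subst h1
    have hp0 : p ≠ 0 := by positivity
    have e : rho H ((1:ℕ):ℤ) = ((2:ℝ) ^ p - 2) / 2 := by
      unfold rho
      rw [← hp]
      push_cast
      rw [show (1:ℝ) + 1 = 2 by norm_num, sub_self, abs_zero, abs_one,
        abs_of_nonneg (by norm_num : (0:ℝ) ≤ 2), Real.one_rpow, Real.zero_rpow hp0]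
      ring
    have h2p : (2:ℝ) ^ p ≤ 4 := by
      calc (2:ℝ) ^ p ≤ (2:ℝ) ^ (2:ℝ) := Real.rpow_le_rpow_of_exponent_le one_le_two hp2
        _ = 4 := by
          rw [show (2:ℝ) = ((2:ℕ):ℝ) by norm_num, Real.rpow_natCast]; norm_num
    have h2p' : (2:ℝ) ≤ (2:ℝ) ^ p := by
      calc (2:ℝ) = (2:ℝ) ^ (1:ℝ) := (Real.rpow_one 2).symm
        _ ≤ (2:ℝ) ^ p := Real.rpow_le_rpow_of_exponent_le one_le_two hp1
    rw [e, Nat.cast_one, Real.one_rpow, abs_of_nonneg (by linarith)]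
    linarith
  · -- m ≥ 2
    have hm2 : 2 ≤ m := h2
    have ha : (2:ℝ) ≤ (m:ℝ) := by exact_mod_cast hm2
    set a : ℝ := (m:ℝ) with haa
    have ha0 : 0 < a := by linarith
    have ha1 : 0 < a - 1 := by linarith
    have ha1' : (0:ℝ) ≤ a + 1 := by linarith
    have habs : rho H m = ((a+1) ^ p + (a-1) ^ p - 2 * a ^ p) / 2 := by
      unfold rho
      rw [abs_of_nonneg (by push_cast; linarith : ((m:ℤ):ℝ) + 1 ≥ 0),
        abs_of_nonneg (by push_cast; linarith : ((m:ℤ):ℝ) - 1 ≥ 0),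
        abs_of_nonneg (by push_cast; linarith : ((m:ℤ):ℝ) ≥ 0)]
      push_cast
      ring_nf
      rw [hp, haa]; ring_nf
    have h3 := tangent_lower hp1 ha0 (by linarith : (0:ℝ) ≤ a + 1)
    have h4 := tangent_lower hp1 ha0 (by linarith : (0:ℝ) ≤ a - 1)
    have h1 := tangent_lower hp1 (by linarith : (0:ℝ) < a + 1) (by linarith : (0:ℝ) ≤ a)
    have h2' := tangent_lower hp1 ha1 (by linarith : (0:ℝ) ≤ a)
    have h5 := tangent_upper (by linarith : (0:ℝ) ≤ p - 1) (by linarith : p - 1 ≤ 1)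
      ha1 (by linarith : (0:ℝ) ≤ a + 1)
    rw [show (a + 1) - a = 1 by ring] at h3
    rw [show (a - 1) - a = -1 by ring] at h4
    rw [show a - (a + 1) = -1 by ring] at h1
    rw [show a - (a - 1) = 1 by ring] at h2'
    rw [show (a + 1) - (a - 1) = 2 by ring, show p - 1 - 1 = p - 2 by ring] at h5
    -- nonneg of second difference
    have hD0 : 0 ≤ (a+1) ^ p + (a-1) ^ p - 2 * a ^ p := by linarith
    -- upper bound
    have hpn : 0 ≤ p := by linarith
    have e5' := mul_le_mul_of_nonneg_left h5 hpn
    have hDup : (a+1) ^ p + (a-1) ^ p - 2 * a ^ p ≤ 2 * (p * (p-1) * (a-1) ^ (p-2)) := by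
      linarith [h1, h2', e5']
    have hpp : p * (p - 1) ≤ 2 := by nlinarith
    have hpow_pos : (0:ℝ) < (a-1) ^ (p-2) := rpow_pos_of_pos ha1 _
    have hpp2 := mul_le_mul_of_nonneg_right hpp hpow_pos.le
    have hrho_le : |rho H m| ≤ 2 * (a-1) ^ (p-2) := by
      rw [habs, abs_of_nonneg (by linarith : (0:ℝ) ≤ ((a+1) ^ p + (a-1) ^ p - 2 * a ^ p) / 2)]
      linarith [hDup, hpp2]
    -- (a-1)^(p-2) ≤ 2 * a^(p-2)
    have hexp : p - 2 = -(1 / (r:ℝ)) := by rw [hpval]; ring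
    have hmono : (a-1) ^ (p-2) ≤ (a/2) ^ (p-2) := by
      apply Real.rpow_le_rpow_of_nonpos (by linarith) (by linarith) (by rw [hexp]; linarith)
    have hhalf : (a/2 : ℝ) ^ (p-2) = a ^ (p-2) * 2 ^ (1 / (r:ℝ)) := by
      rw [Real.div_rpow ha0.le (by norm_num), hexp, Real.rpow_neg (by norm_num : (0:ℝ) ≤ 2)]
      field_simp
    have h2r : (2:ℝ) ^ (1 / (r:ℝ)) ≤ 2 := by
      calc (2:ℝ) ^ (1 / (r:ℝ)) ≤ (2:ℝ) ^ (1:ℝ) :=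
            Real.rpow_le_rpow_of_exponent_le (by norm_num) hrinv1
        _ = 2 := Real.rpow_one 2
    have hapos : (0:ℝ) < a ^ (p-2) := rpow_pos_of_pos ha0 _
    calc |rho H m| ≤ 2 * (a-1) ^ (p-2) := hrho_le
      _ ≤ 2 * (a ^ (p-2) * 2 ^ (1 / (r:ℝ))) := by
          rw [← hhalf]; linarith [hmono]
      _ ≤ 4 * a ^ (p-2) := by nlinarith
      _ = 4 * (m:ℝ) ^ (-(1 / (r:ℝ))) := by rw [hexp]

lemma rho_pow_bound (H : ℝ) (hH1 : H < 1) (r : ℕ) (hr : 1 ≤ r) (hHr : H = 1 - 1/(2*r))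
    (m : ℕ) (hm : 1 ≤ m) :
    |rho H m| ^ r ≤ 4 ^ r * ((m:ℝ))⁻¹ := by
  have hr0 : (r:ℝ) ≠ 0 := by positivity
  have hb := rho_nat_bound H hH1 r hr hHr m hm
  have hm0 : (0:ℝ) < (m:ℝ) := by exact_mod_cast hm
  have h1 : |rho H m| ^ r ≤ (4 * (m:ℝ) ^ (-(1 / (r:ℝ)))) ^ r :=
    pow_le_pow_left₀ (abs_nonneg _) hb r
  have h2 : ((m:ℝ) ^ (-(1 / (r:ℝ)))) ^ r = ((m:ℝ))⁻¹ := by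
    rw [← Real.rpow_natCast ((m:ℝ) ^ (-(1 / (r:ℝ)))) r, ← Real.rpow_mul hm0.le,
      show (-(1 / (r:ℝ))) * (r:ℝ) = -1 by field_simp, Real.rpow_neg_one]
  calc |rho H m| ^ r ≤ (4 * (m:ℝ) ^ (-(1 / (r:ℝ)))) ^ r := h1
    _ = 4 ^ r * ((m:ℝ) ^ (-(1 / (r:ℝ)))) ^ r := mul_pow _ _ _
    _ = 4 ^ r * ((m:ℝ))⁻¹ := by rw [h2]

lemma inner_le (N k : ℕ) (hk : k < N) (F : ℤ → ℝ) (hF0 : ∀ m : ℤ, 0 ≤ F m)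
    (hFneg : ∀ m : ℤ, F (-m) = F m) :
    ∑ l ∈ Finset.range N, F ((k:ℤ) - l) ≤ 2 * ∑ m ∈ Finset.range N, F (m:ℤ) := by
  have hkN : k + 1 ≤ N := hk
  have hN1 : 1 ≤ N := le_trans (Nat.le_add_left 1 k) hkN
  have hsplit : ∑ l ∈ Finset.range N, F ((k:ℤ) - l)
      = (∑ l ∈ Finset.range (k+1), F ((k:ℤ) - l))
        + ∑ l ∈ Finset.Ico (k+1) N, F ((k:ℤ) - l) := by
    rw [Finset.range_eq_Ico, ← Finset.sum_Ico_consecutive _ (Nat.zero_le _) hkN,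
      ← Finset.range_eq_Ico]
  have hS1 : ∑ l ∈ Finset.range (k+1), F ((k:ℤ) - l)
      ≤ ∑ m ∈ Finset.range N, F (m:ℤ) := by
    have e1 : ∑ l ∈ Finset.range (k+1), F ((k:ℤ) - l)
        = ∑ j ∈ Finset.range (k+1), F (j:ℤ) := by
      rw [← Finset.sum_range_reflect (fun l => F ((k:ℤ) - l)) (k+1)]
      refine Finset.sum_congr rfl fun j hj => ?_
      have hj' : j ≤ k := Nat.lt_succ_iff.mp (Finset.mem_range.mp hj)
      congr 1
      rw [show k + 1 - 1 - j = k - j from by omega]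
      push_cast [Nat.cast_sub hj']
      ring
    rw [e1]
    exact Finset.sum_le_sum_of_subset_of_nonneg
      (Finset.range_subset_range.mpr hkN) (fun i _ _ => hF0 _)
  have hS2 : ∑ l ∈ Finset.Ico (k+1) N, F ((k:ℤ) - l)
      ≤ ∑ m ∈ Finset.range N, F (m:ℤ) := by
    rw [Finset.sum_Ico_eq_sum_range]
    have e2 : ∀ i : ℕ, F ((k:ℤ) - ((k:ℤ) + 1 + (i:ℤ))) = F (((i+1 : ℕ)) : ℤ) := by
      intro i
      rw [show (k:ℤ) - ((k:ℤ) + 1 + (i:ℤ)) = -((i+1:ℕ) : ℤ) from by push_cast; ring, hFneg]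
    calc ∑ i ∈ Finset.range (N - (k+1)), F ((k:ℤ) - (↑(k + 1 + i)))
        = ∑ i ∈ Finset.range (N - (k+1)), F ((i+1 : ℕ) : ℤ) := by
          refine Finset.sum_congr rfl fun i _ => ?_
          rw [show ((k + 1 + i : ℕ) : ℤ) = (k:ℤ) + 1 + i from by push_cast; ring]
          exact e2 i
      _ ≤ ∑ i ∈ Finset.range (N - 1), F ((i+1 : ℕ) : ℤ) :=
          Finset.sum_le_sum_of_subset_of_nonneg
            (Finset.range_subset_range.mpr (by omega)) (fun i _ _ => hF0 _)
      _ ≤ ∑ m ∈ Finset.range N, F (m:ℤ) := by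
          have := Finset.sum_range_succ' (fun m => F (m:ℤ)) (N - 1)
          rw [show N - 1 + 1 = N from by omega] at this
          rw [this]
          push_cast
          have h0 := hF0 ((0:ℕ):ℤ)
          simp only [Nat.cast_zero] at h0
          nlinarith [h0]
  linarith

theorem stmt_10 (H : ℝ) (hH0 : 0 < H) (hH1 : H < 1) (r : ℕ) (hr : 1 ≤ r)
    (hHr : H = 1 - 1/(2*r)) :
    ∃ C : ℝ, ∀ n : ℕ, 1 ≤ n → ∀ t : ℝ, 0 ≤ t →
      (2:ℝ) ^ (-(n:ℝ)*r*H) *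
        ∑ k ∈ Finset.range ⌊(2:ℝ) ^ ((n:ℝ)/2) * t⌋₊,
          ∑ l ∈ Finset.range ⌊(2:ℝ) ^ ((n:ℝ)/2) * t⌋₊, |rho H ((k:ℤ) - l)| ^ r
      ≤ C * (2:ℝ) ^ ((n:ℝ) * (1/2 - r*H)) * (t * (1 + n) + t^2) := by
  set A : ℝ := 4 ^ r + 1 with hA
  have hApos : (0:ℝ) < A := by positivity
  have h4r : (0:ℝ) ≤ 4 ^ r := by positivity
  refine ⟨2 * A, fun n hn t ht => ?_⟩
  set F : ℤ → ℝ := fun z => |rho H z| ^ r with hF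
  have hF0 : ∀ m : ℤ, 0 ≤ F m := fun m => pow_nonneg (abs_nonneg _) r
  have hFneg : ∀ m : ℤ, F (-m) = F m := fun m => by simp only [hF, rho_neg]
  set N : ℕ := ⌊(2:ℝ) ^ ((n:ℝ)/2) * t⌋₊ with hN
  have hx0 : (0:ℝ) ≤ (2:ℝ) ^ ((n:ℝ)/2) * t := by positivity
  have hRpos : (0:ℝ) < (2:ℝ) ^ ((n:ℝ) * (1/2 - r*H)) := rpow_pos_of_pos two_pos _
  have hRHS0 : (0:ℝ) ≤ t * (1 + n) + t ^ 2 := by positivity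
  by_cases hN0 : N = 0
  · rw [hN0]
    simp only [Finset.range_zero, Finset.sum_empty, mul_zero]
    positivity
  · have hN1 : 1 ≤ N := Nat.one_le_iff_ne_zero.mpr hN0
    have hNle : (N:ℝ) ≤ (2:ℝ) ^ ((n:ℝ)/2) * t := Nat.floor_le hx0
    have hNge : (1:ℝ) ≤ (N:ℝ) := by exact_mod_cast hN1
    have htpos : 0 < t := by
      by_contra h
      push_neg at h
      have : t = 0 := le_antisymm h ht
      rw [this, mul_zero] at hNle
      linarith
    -- bound on T = ∑_{m<N} F m
    set T : ℝ := ∑ m ∈ Finset.range N, F (m:ℤ) with hT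
    have hTnonneg : 0 ≤ T := Finset.sum_nonneg fun i _ => hF0 _
    have hF0val : F ((0:ℕ):ℤ) = 1 := by
      simp only [hF, Nat.cast_zero, rho_zero H hH0, abs_one, one_pow]
    have hharm : ∑ i ∈ Finset.range (N-1), F (((i+1:ℕ)):ℤ)
        ≤ 4 ^ r * (harmonic (N-1) : ℝ) := by
      have : ∀ i ∈ Finset.range (N-1), F (((i+1:ℕ)):ℤ) ≤ 4 ^ r * (((i+1:ℕ)):ℝ)⁻¹ := by
        intro i _
        exact rho_pow_bound H hH1 r hr hHr (i+1) (Nat.le_add_left 1 i)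
      calc ∑ i ∈ Finset.range (N-1), F (((i+1:ℕ)):ℤ)
          ≤ ∑ i ∈ Finset.range (N-1), 4 ^ r * (((i+1:ℕ)):ℝ)⁻¹ := Finset.sum_le_sum this
        _ = 4 ^ r * ∑ i ∈ Finset.range (N-1), (((i+1:ℕ)):ℝ)⁻¹ := by
            rw [Finset.mul_sum]
        _ = 4 ^ r * (harmonic (N-1) : ℝ) := by
            congr 1
            rw [harmonic]
            push_cast
            rfl
    have hlogmono : Real.log ((N:ℝ) - 1) ≤ Real.log N := by
      rcases eq_or_lt_of_le hNge with h | h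
      · rw [← h]; norm_num
      · exact Real.log_le_log (by linarith) (by linarith)
    have hharm2 : (harmonic (N-1) : ℝ) ≤ 1 + Real.log N := by
      calc (harmonic (N-1) : ℝ) ≤ 1 + Real.log ((N-1 : ℕ)) := harmonic_le_one_add_log _
        _ ≤ 1 + Real.log N := by
            have : ((N - 1 : ℕ) : ℝ) = (N:ℝ) - 1 := by
              push_cast [Nat.cast_sub hN1]; ring
            rw [this]
            linarith [hlogmono]
    have hTle : T ≤ 1 + 4 ^ r * (1 + Real.log N) := by
      have hsplitT := Finset.sum_range_succ' (fun m => F (m:ℤ)) (N - 1)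
      rw [show N - 1 + 1 = N from by omega] at hsplitT
      have : T = (∑ i ∈ Finset.range (N-1), F (((i+1:ℕ)):ℤ)) + F ((0:ℕ):ℤ) := by
        rw [hT, hsplitT]
      rw [this, hF0val]
      have := mul_le_mul_of_nonneg_left hharm2 h4r
      linarith [hharm, this]
    -- log N ≤ n + t
    have hlogN : Real.log N ≤ (n:ℝ) + t := by
      have h1 : Real.log N ≤ Real.log ((2:ℝ) ^ ((n:ℝ)/2) * t) :=
        Real.log_le_log (by linarith) hNle
      have h2 : Real.log ((2:ℝ) ^ ((n:ℝ)/2) * t)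
          = ((n:ℝ)/2) * Real.log 2 + Real.log t := by
        rw [Real.log_mul (by positivity) htpos.ne', Real.log_rpow two_pos]
      have hlog2 : Real.log 2 ≤ 1 := by
        linarith [Real.log_le_sub_one_of_pos (by norm_num : (0:ℝ) < 2)]
      have hlogt : Real.log t ≤ t := by
        linarith [Real.log_le_sub_one_of_pos htpos]
      have hn0 : (0:ℝ) ≤ (n:ℝ) := Nat.cast_nonneg n
      have hlog2' : (0:ℝ) ≤ Real.log 2 := Real.log_nonneg one_le_two
      nlinarith [h1, h2, hlog2, hlogt]
    -- T ≤ A(1+n) + A t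
    have hTfin : T ≤ A * (1 + (n:ℝ)) + A * t := by
      have hmul := mul_le_mul_of_nonneg_left hlogN h4r
      rw [hA]
      have hn0 : (0:ℝ) ≤ (n:ℝ) := Nat.cast_nonneg n
      nlinarith [hTle, hmul]
    -- sum over k
    have hsum : ∑ k ∈ Finset.range N, ∑ l ∈ Finset.range N, F ((k:ℤ) - l)
        ≤ (N:ℝ) * (2 * T) := by
      calc ∑ k ∈ Finset.range N, ∑ l ∈ Finset.range N, F ((k:ℤ) - l)
          ≤ ∑ _k ∈ Finset.range N, 2 * T := by
            refine Finset.sum_le_sum fun k hk => ?_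
            exact inner_le N k (Finset.mem_range.mp hk) F hF0 hFneg
        _ = (N:ℝ) * (2 * T) := by
            rw [Finset.sum_const, Finset.card_range, nsmul_eq_mul]
    have hfinal : (N:ℝ) * (2 * T) ≤ ((2:ℝ) ^ ((n:ℝ)/2) * t) * (2 * (A * (1 + (n:ℝ)) + A * t)) := by
      apply mul_le_mul hNle (by linarith) (by linarith) hx0
    have hEpos : (0:ℝ) < (2:ℝ) ^ (-(n:ℝ)*r*H) := rpow_pos_of_pos two_pos _
    have hchain : (2:ℝ) ^ (-(n:ℝ)*r*H) *
        ∑ k ∈ Finset.range N, ∑ l ∈ Finset.range N, F ((k:ℤ) - l)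
        ≤ (2:ℝ) ^ (-(n:ℝ)*r*H) * (((2:ℝ) ^ ((n:ℝ)/2) * t) * (2 * (A * (1 + (n:ℝ)) + A * t))) :=
      mul_le_mul_of_nonneg_left (le_trans hsum hfinal) hEpos.le
    have hpoweq : (2:ℝ) ^ (-(n:ℝ)*r*H) * (2:ℝ) ^ ((n:ℝ)/2) = (2:ℝ) ^ ((n:ℝ) * (1/2 - r*H)) := by
      rw [← Real.rpow_add two_pos]
      congr 1
      ring
    have heq : (2:ℝ) ^ (-(n:ℝ)*r*H) * (((2:ℝ) ^ ((n:ℝ)/2) * t) * (2 * (A * (1 + (n:ℝ)) + A * t)))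
        = 2 * A * (2:ℝ) ^ ((n:ℝ) * (1/2 - r*H)) * (t * (1 + (n:ℝ)) + t ^ 2) := by
      rw [← hpoweq]
      ring
    calc (2:ℝ) ^ (-(n:ℝ)*r*H) *
        ∑ k ∈ Finset.range N, ∑ l ∈ Finset.range N, |rho H ((k:ℤ) - l)| ^ r
        ≤ (2:ℝ) ^ (-(n:ℝ)*r*H) * (((2:ℝ) ^ ((n:ℝ)/2) * t) * (2 * (A * (1 + (n:ℝ)) + A * t))) :=
          hchain
      _ = 2 * A * (2:ℝ) ^ ((n:ℝ) * (1/2 - r*H)) * (t * (1 + (n:ℝ)) + t ^ 2) := heq
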